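/- Let 0 < α < n, 0 < β < 1, 0 < α+β < n, 1 < p < n/(α+β), 1/q = 1/p − (α+β)/n. If the maximal commutator M_{α,b} is bounded from L^p(ℝⁿ) to L^q(ℝⁿ), then sup_Q |Q|^{−β/n} (|Q|^{−1} ∫_Q |b(x) − b_Q|^q dx)^{1/q} < ∞, where the supremum is over all axis-parallel cubes Q and b_Q = |Q|^{−1}∫_Q b. -/

import Mathlib

open MeasureTheory ENNReal Set

noncomputable section

/-- An axis-parallel (closed) cube in `ℝⁿ`. -/
def IsCube (n : ℕ) (Q : Set (Fin n → ℝ)) : Prop :=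
  ∃ (c : Fin n → ℝ) (h : ℝ), 0 < h ∧ Q = Set.univ.pi fun i => Set.Icc (c i) (c i + h)

/-- The fractional maximal function `M_γ f (x) = sup_{Q ∋ x} |Q|^{γ/n-1} ∫_Q |f|`. -/
def fracMax (n : ℕ) (γ : ℝ) (f : (Fin n → ℝ) → ℝ) (x : Fin n → ℝ) : ℝ≥0∞ :=
  ⨆ (Q : Set (Fin n → ℝ)) (_ : IsCube n Q) (_ : x ∈ Q),
    volume Q ^ (γ / n - 1) * ∫⁻ y in Q, ‖f y‖₊

/-- The local fractional maximal function relative to a cube `Q₀`. -/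
def localFracMax (n : ℕ) (γ : ℝ) (Q₀ : Set (Fin n → ℝ)) (f : (Fin n → ℝ) → ℝ)
    (x : Fin n → ℝ) : ℝ≥0∞ :=
  ⨆ (Q : Set (Fin n → ℝ)) (_ : IsCube n Q) (_ : x ∈ Q) (_ : Q ⊆ Q₀),
    volume Q ^ (γ / n - 1) * ∫⁻ y in Q, ‖f y‖₊

/-- The maximal commutator `M_{α,b}`. -/
def maxComm (n : ℕ) (α : ℝ) (b f : (Fin n → ℝ) → ℝ) (x : Fin n → ℝ) : ℝ≥0∞ :=
  ⨆ (Q : Set (Fin n → ℝ)) (_ : IsCube n Q) (_ : x ∈ Q),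
    volume Q ^ (α / n - 1) * ∫⁻ y in Q, (‖b x - b y‖₊ : ℝ≥0∞) * ‖f y‖₊

/-- The nonlinear commutator `[b, M_α](f) = b · M_α(f) - M_α(b f)`. -/
def ncomm (n : ℕ) (α : ℝ) (b f : (Fin n → ℝ) → ℝ) (x : Fin n → ℝ) : ℝ :=
  b x * (fracMax n α f x).toReal - (fracMax n α (fun y => b y * f y) x).toReal

/-- Average of `b` over `Q`. -/
def cubeAvg (n : ℕ) (Q : Set (Fin n → ℝ)) (b : (Fin n → ℝ) → ℝ) : ℝ :=
  (volume Q).toReal⁻¹ * ∫ x in Q, b x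

/-!
Test the hypothesis on `f = χ_Q`. For `x ∈ Q` the cube `Q` itself is admissible in the supremum
defining `M_{α,b}(χ_Q)(x)`, so `|b(x) - b_Q| ≤ |Q|⁻¹ ∫_Q |b(x) - b(y)| dy ≤ |Q|^{-α/n} M_{α,b}(χ_Q)(x)`.
Averaging the `q`-th power over `Q` and using `‖χ_Q‖_p ≤ |Q|^{1/p}` bounds `|Q|^{-β/n}` times the
`L^q` mean oscillation by `K |Q|^{1/p - 1/q - (α+β)/n} = K`.
-/

namespace IsCube

variable {n : ℕ} {Q : Set (Fin n → ℝ)}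

lemma measurableSet (hQ : IsCube n Q) : MeasurableSet Q := by
  obtain ⟨c, h, -, rfl⟩ := hQ
  exact MeasurableSet.univ_pi fun _ => measurableSet_Icc

lemma isCompact (hQ : IsCube n Q) : IsCompact Q := by
  obtain ⟨c, h, -, rfl⟩ := hQ
  exact isCompact_univ_pi fun _ => isCompact_Icc

lemma exists_volume_eq_ofReal_pow (hQ : IsCube n Q) :
    ∃ h : ℝ, 0 < h ∧ volume Q = ENNReal.ofReal h ^ n := by
  obtain ⟨c, h, hh, rfl⟩ := hQ
  refine ⟨h, hh, ?_⟩
  rw [volume_pi_pi]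
  simp [Real.volume_Icc]

lemma volume_ne_zero (hQ : IsCube n Q) : volume Q ≠ 0 := by
  obtain ⟨h, hh, hV⟩ := hQ.exists_volume_eq_ofReal_pow
  rw [hV]
  exact pow_ne_zero _ (ENNReal.ofReal_pos.mpr hh).ne'

lemma volume_ne_top (hQ : IsCube n Q) : volume Q ≠ ⊤ := by
  obtain ⟨h, -, hV⟩ := hQ.exists_volume_eq_ofReal_pow
  rw [hV]
  exact ENNReal.pow_ne_top ENNReal.ofReal_ne_top

end IsCube

section MeanOscillation

variable {n : ℕ} {Q : Set (Fin n → ℝ)} {b : (Fin n → ℝ) → ℝ} {x : Fin n → ℝ}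

lemma ofReal_abs_sub_cubeAvg_le (hQ0 : volume Q ≠ 0) (hQtop : volume Q ≠ ⊤)
    (hb : IntegrableOn b Q) (x : Fin n → ℝ) :
    ENNReal.ofReal |b x - cubeAvg n Q b| ≤ (volume Q)⁻¹ * ∫⁻ y in Q, ‖b x - b y‖ₑ := by
  have hV : 0 < volume.real Q := ENNReal.toReal_pos hQ0 hQtop
  have hconst : IntegrableOn (fun _ => b x) Q := integrableOn_const hQtop
  have hdiff : IntegrableOn (fun y => b x - b y) Q := hconst.sub hb
  have hsub : b x - cubeAvg n Q b = (volume.real Q)⁻¹ * ∫ y in Q, (b x - b y) := by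
    rw [integral_sub hconst hb, setIntegral_const, cubeAvg, smul_eq_mul, ← measureReal_def]
    field_simp
  calc ENNReal.ofReal |b x - cubeAvg n Q b|
      ≤ ENNReal.ofReal ((volume.real Q)⁻¹ * ∫ y in Q, ‖b x - b y‖) := by
        gcongr
        rw [hsub, abs_mul, abs_of_pos (inv_pos.mpr hV)]
        gcongr
        exact norm_integral_le_integral_norm fun y => b x - b y
    _ = (volume Q)⁻¹ * ∫⁻ y in Q, ‖b x - b y‖ₑ := by
        rw [ENNReal.ofReal_mul (inv_nonneg.mpr hV.le), ENNReal.ofReal_inv_of_pos hV,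
          measureReal_def, ENNReal.ofReal_toReal hQtop,
          ofReal_integral_norm_eq_lintegral_enorm hdiff]

lemma rpow_sub_one_mul_setLIntegral_le_maxComm (hQ : IsCube n Q) (α : ℝ) (hx : x ∈ Q) :
    volume Q ^ (α / n - 1) * ∫⁻ y in Q, ‖b x - b y‖ₑ ≤ maxComm n α b (Q.indicator 1) x := by
  refine le_iSup_of_le Q (le_iSup_of_le hQ (le_iSup_of_le hx (le_of_eq ?_)))
  congr 1
  refine setLIntegral_congr_fun hQ.measurableSet fun y hy => ?_
  simp [Set.indicator_of_mem hy, enorm_eq_nnnorm]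

lemma ofReal_abs_sub_cubeAvg_le_maxComm (hQ : IsCube n Q) (hb : IntegrableOn b Q) (α : ℝ)
    (hx : x ∈ Q) :
    ENNReal.ofReal |b x - cubeAvg n Q b|
      ≤ volume Q ^ (-(α / n)) * maxComm n α b (Q.indicator 1) x := by
  calc ENNReal.ofReal |b x - cubeAvg n Q b|
      ≤ (volume Q)⁻¹ * ∫⁻ y in Q, ‖b x - b y‖ₑ :=
        ofReal_abs_sub_cubeAvg_le hQ.volume_ne_zero hQ.volume_ne_top hb x
    _ = volume Q ^ (-(α / n)) * (volume Q ^ (α / n - 1) * ∫⁻ y in Q, ‖b x - b y‖ₑ) := by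
        rw [← mul_assoc, ← ENNReal.rpow_add _ _ hQ.volume_ne_zero hQ.volume_ne_top,
          show -(α / n) + (α / n - 1) = -1 by ring, ENNReal.rpow_neg_one]
    _ ≤ volume Q ^ (-(α / n)) * maxComm n α b (Q.indicator 1) x := by
        gcongr
        exact rpow_sub_one_mul_setLIntegral_le_maxComm hQ α hx

lemma setLIntegral_rpow_abs_sub_cubeAvg_le (hQ : IsCube n Q) (hb : IntegrableOn b Q) (α : ℝ) {q : ℝ} (hq : 0 ≤ q) :
    ∫⁻ x in Q, ENNReal.ofReal |b x - cubeAvg n Q b| ^ q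
      ≤ (volume Q ^ (-(α / n))) ^ q * ∫⁻ x, maxComm n α b (Q.indicator 1) x ^ q := by
  have hV : (volume Q ^ (-(α / n))) ^ q ≠ ⊤ :=
    ENNReal.rpow_ne_top_of_nonneg hq
      (ENNReal.rpow_ne_top_of_ne_zero hQ.volume_ne_zero hQ.volume_ne_top)
  calc ∫⁻ x in Q, ENNReal.ofReal |b x - cubeAvg n Q b| ^ q
      ≤ ∫⁻ x in Q, (volume Q ^ (-(α / n)) * maxComm n α b (Q.indicator 1) x) ^ q :=
        setLIntegral_mono' hQ.measurableSet fun x hx =>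
          ENNReal.rpow_le_rpow (ofReal_abs_sub_cubeAvg_le_maxComm hQ hb α hx) hq
    _ = (volume Q ^ (-(α / n))) ^ q * ∫⁻ x in Q, maxComm n α b (Q.indicator 1) x ^ q := by
        simp_rw [ENNReal.mul_rpow_of_nonneg _ _ hq]
        exact lintegral_const_mul' _ _ hV
    _ ≤ (volume Q ^ (-(α / n))) ^ q * ∫⁻ x, maxComm n α b (Q.indicator 1) x ^ q :=
        mul_le_mul_right (setLIntegral_le_lintegral _ _) _

lemma rpow_meanOscillation_le (hQ : IsCube n Q) (hb : IntegrableOn b Q) (α : ℝ) {q : ℝ} (hq : 0 < q) :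
    ((volume Q)⁻¹ * ∫⁻ x in Q, ENNReal.ofReal |b x - cubeAvg n Q b| ^ q) ^ (1 / q)
      ≤ volume Q ^ (-(α / n) - 1 / q)
        * (∫⁻ x, maxComm n α b (Q.indicator 1) x ^ q) ^ (1 / q) := by
  calc ((volume Q)⁻¹ * ∫⁻ x in Q, ENNReal.ofReal |b x - cubeAvg n Q b| ^ q) ^ (1 / q)
      ≤ ((volume Q)⁻¹ * ((volume Q ^ (-(α / n))) ^ q
          * ∫⁻ x, maxComm n α b (Q.indicator 1) x ^ q)) ^ (1 / q) := by
        gcongr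
        exact setLIntegral_rpow_abs_sub_cubeAvg_le hQ hb α hq.le
    _ = volume Q ^ (-(α / n) - 1 / q)
        * (∫⁻ x, maxComm n α b (Q.indicator 1) x ^ q) ^ (1 / q) := by
        have hq' : 0 ≤ 1 / q := by positivity
        rw [ENNReal.mul_rpow_of_nonneg _ _ hq', ENNReal.mul_rpow_of_nonneg _ _ hq',
          ← ENNReal.rpow_mul, mul_one_div_cancel hq.ne', ENNReal.rpow_one, ← ENNReal.rpow_neg_one,
          ← ENNReal.rpow_mul, ← mul_assoc,
          ← ENNReal.rpow_add _ _ hQ.volume_ne_zero hQ.volume_ne_top]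
        ring_nf

end MeanOscillation

theorem stmt6_general (n : ℕ) (α β p q : ℝ)
    (hp1 : 1 < p) (hp2 : p < n / (α + β)) (hq : 1 / q = 1 / p - (α + β) / n)
    (b : (Fin n → ℝ) → ℝ) (hb : LocallyIntegrable b volume)
    (hbound : ∃ K : ℝ≥0∞, K ≠ ⊤ ∧ ∀ f : (Fin n → ℝ) → ℝ,
      MemLp f (ENNReal.ofReal p) volume →
      (∫⁻ x, maxComm n α b f x ^ q) ^ (1 / q)
        ≤ K * eLpNorm f (ENNReal.ofReal p) volume) :
    ∃ C : ℝ≥0∞, C ≠ ⊤ ∧ ∀ Q : Set (Fin n → ℝ), IsCube n Q →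
      volume Q ^ (-(β / (n : ℝ))) *
        ((volume Q)⁻¹ * ∫⁻ x in Q, ENNReal.ofReal |b x - cubeAvg n Q b| ^ q) ^ (1 / q)
      ≤ C := by
  obtain ⟨K, hK_ne_top, hK⟩ := hbound
  have hp : 0 < p := zero_lt_one.trans hp1
  have hq_pos : 0 < q := by
    have : (α + β) / n < 1 / p := by
      simpa [one_div_div] using one_div_lt_one_div_of_lt hp hp2
    exact one_div_pos.mp (by rw [hq]; linarith)
  refine ⟨K, hK_ne_top, fun Q hQ => ?_⟩
  have hV0 := hQ.volume_ne_zero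
  have hVtop := hQ.volume_ne_top
  have hosc := rpow_meanOscillation_le hQ (hb.integrableOn_isCompact hQ.isCompact) α hq_pos
  have hnorm : eLpNorm (Q.indicator fun _ => (1 : ℝ)) (ENNReal.ofReal p) volume
      ≤ volume Q ^ (1 / p) := by
    simpa [ENNReal.toReal_ofReal hp.le] using
      eLpNorm_indicator_const_le (c := (1 : ℝ)) (ENNReal.ofReal p)
  have hM : (∫⁻ x, maxComm n α b (Q.indicator 1) x ^ q) ^ (1 / q) ≤ K * volume Q ^ (1 / p) :=
    (hK _ (memLp_indicator_const _ hQ.measurableSet (1 : ℝ) (Or.inr hVtop))).trans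
      (mul_le_mul_right hnorm K)
  calc volume Q ^ (-(β / (n : ℝ))) *
        ((volume Q)⁻¹ * ∫⁻ x in Q, ENNReal.ofReal |b x - cubeAvg n Q b| ^ q) ^ (1 / q)
      ≤ volume Q ^ (-(β / n)) * (volume Q ^ (-(α / n) - 1 / q) * (K * volume Q ^ (1 / p))) := by
        gcongr
        exact hosc.trans (mul_le_mul_right hM _)
    _ = volume Q ^ (-(β / n) + (-(α / n) - 1 / q) + 1 / p) * K := by
        rw [ENNReal.rpow_add _ _ hV0 hVtop, ENNReal.rpow_add _ _ hV0 hVtop]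
        ring
    _ = K := by
        rw [show -(β / n) + (-(α / n) - 1 / q) + 1 / p = 0 by rw [hq]; ring, ENNReal.rpow_zero,
          one_mul]

theorem stmt6 (n : ℕ) (α β p q : ℝ) (hα0 : 0 < α) (hαn : α < n)
    (hβ0 : 0 < β) (hβ1 : β < 1) (hαβn : α + β < n)
    (hp1 : 1 < p) (hp2 : p < n / (α + β)) (hq : 1 / q = 1 / p - (α + β) / n)
    (b : (Fin n → ℝ) → ℝ) (hb : LocallyIntegrable b volume)
    (hbound : ∃ K : ℝ≥0∞, K ≠ ⊤ ∧ ∀ f : (Fin n → ℝ) → ℝ,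
      MemLp f (ENNReal.ofReal p) volume →
      (∫⁻ x, maxComm n α b f x ^ q) ^ (1 / q)
        ≤ K * eLpNorm f (ENNReal.ofReal p) volume) :
    ∃ C : ℝ≥0∞, C ≠ ⊤ ∧ ∀ Q : Set (Fin n → ℝ), IsCube n Q →
      volume Q ^ (-(β / (n : ℝ))) *
        ((volume Q)⁻¹ * ∫⁻ x in Q, ENNReal.ofReal |b x - cubeAvg n Q b| ^ q) ^ (1 / q)
      ≤ C :=
  stmt6_general n α β p q hp1 hp2 hq b hb hbound
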